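/- arXiv:2105.00158 — 2 statements merged into one kernel-verified Lean document; each statement's English description precedes it below -/
import Mathlib

section
/- If y : (ZMod m × ZMod n) → ℝ is centrosymmetric, then the infimum over all d-channel filters f of the correlation objective E(f) equals the infimum over all d-channel filters f of the convolution objective E'(f); that is, the minimum mean-square errors of the correlation filter and the convolution filter are equal. -/
open Finset

noncomputable section

variable {m n : ℕ} [NeZero m] [NeZero n]

/-- Circular correlation: `(x ∘ f)(t) = ∑ s, x s * f (s + t)`. -/
def corr (x f : ZMod m × ZMod n → ℝ) : ZMod m × ZMod n → ℝ :=
  fun t => ∑ s : ZMod m × ZMod n, x s * f (s + t)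

/-- Circular convolution: `(x ⋆ f)(t) = ∑ s, x s * f (t - s)`. -/
def conv (x f : ZMod m × ZMod n → ℝ) : ZMod m × ZMod n → ℝ :=
  fun t => ∑ s : ZMod m × ZMod n, x s * f (t - s)

/-- Reflection: `(σ f)(t) = f (-t)`. -/
def reflect (f : ZMod m × ZMod n → ℝ) : ZMod m × ZMod n → ℝ :=
  fun t => f (-t)

variable {d : ℕ}

/-- Multichannel correlation response `R(x;f) = ∑ l, x^l ∘ f^l`. -/
def corrResp (x f : Fin d → (ZMod m × ZMod n → ℝ)) : ZMod m × ZMod n → ℝ :=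
  fun t => ∑ l : Fin d, corr (x l) (f l) t

/-- Multichannel convolution response `R'(x;f) = ∑ l, x^l ⋆ f^l`. -/
def convResp (x f : Fin d → (ZMod m × ZMod n → ℝ)) : ZMod m × ZMod n → ℝ :=
  fun t => ∑ l : Fin d, conv (x l) (f l) t

/-- Channelwise reflection. -/
def creflect (f : Fin d → (ZMod m × ZMod n → ℝ)) : Fin d → (ZMod m × ZMod n → ℝ) :=
  fun l => reflect (f l)

/-- Squared ℓ² norm on `G → ℝ`. -/
def normSq (g : ZMod m × ZMod n → ℝ) : ℝ :=
  ∑ t : ZMod m × ZMod n, (g t) ^ 2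

variable {T : ℕ}

/-- Correlation objective. -/
def corrObj (x : Fin T → Fin d → (ZMod m × ZMod n → ℝ)) (α : Fin T → ℝ) (lam : ℝ)
    (y : ZMod m × ZMod n → ℝ) (f : Fin d → (ZMod m × ZMod n → ℝ)) : ℝ :=
  (∑ k : Fin T, α k * normSq (fun t => corrResp (x k) f t - y t)) +
    lam * ∑ l : Fin d, normSq (f l)

/-- Convolution objective. -/
def convObj (x : Fin T → Fin d → (ZMod m × ZMod n → ℝ)) (α : Fin T → ℝ) (lam : ℝ)
    (y : ZMod m × ZMod n → ℝ) (f : Fin d → (ZMod m × ZMod n → ℝ)) : ℝ :=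
  (∑ k : Fin T, α k * normSq (fun t => convResp (x k) f t - y t)) +
    lam * ∑ l : Fin d, normSq (f l)


lemma normSq_comp_neg (g : ZMod m × ZMod n → ℝ) :
    normSq (fun t => g (-t)) = normSq g := by
  unfold normSq
  exact Fintype.sum_equiv (Equiv.neg _) _ _ (fun t => rfl)

lemma conv_reflect (x f : ZMod m × ZMod n → ℝ) (t : ZMod m × ZMod n) :
    conv x (reflect f) t = corr x f (-t) := by
  unfold conv corr reflect
  apply Finset.sum_congr rfl
  intro s _
  rw [show -(t - s) = s + -t by ring]

lemma convObj_creflect (x : Fin T → Fin d → (ZMod m × ZMod n → ℝ)) (α : Fin T → ℝ)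
    (lam : ℝ) (y : ZMod m × ZMod n → ℝ) (hy : ∀ t : ZMod m × ZMod n, y (-t) = y t)
    (f : Fin d → (ZMod m × ZMod n → ℝ)) :
    convObj x α lam y (creflect f) = corrObj x α lam y f := by
  unfold convObj corrObj
  congr 1
  · apply Finset.sum_congr rfl
    intro k _
    congr 1
    have h1 : (fun t => convResp (x k) (creflect f) t - y t)
        = fun t => (fun s => corrResp (x k) f s - y s) (-t) := by
      funext t
      simp only [convResp, corrResp, creflect, conv_reflect, hy]
    rw [h1]; exact normSq_comp_neg (fun s => corrResp (x k) f s - y s)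
  · congr 1
    apply Finset.sum_congr rfl
    intro l _
    show normSq (fun t => f l (-t)) = normSq (f l)
    exact normSq_comp_neg (f l)

lemma creflect_involutive : Function.Involutive (creflect (m := m) (n := n) (d := d)) := by
  intro f
  funext l t
  simp [creflect, reflect]

/-- If `y` is centrosymmetric, the infima of `E` and `E'` coincide. -/
theorem iInf_corrObj_eq_iInf_convObj
    (x : Fin T → Fin d → (ZMod m × ZMod n → ℝ)) (α : Fin T → ℝ) (lam : ℝ)
    (y : ZMod m × ZMod n → ℝ) (hy : ∀ t : ZMod m × ZMod n, y (-t) = y t) :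
    (⨅ f : Fin d → (ZMod m × ZMod n → ℝ), corrObj x α lam y f) =
      ⨅ f : Fin d → (ZMod m × ZMod n → ℝ), convObj x α lam y f := by
  have hinv := creflect_involutive (m := m) (n := n) (d := d)
  let e := hinv.toPerm
  calc (⨅ f, corrObj x α lam y f)
      = ⨅ f, convObj x α lam y (creflect f) := by
        exact iInf_congr fun f => (convObj_creflect x α lam y hy f).symm
    _ = ⨅ f, convObj x α lam y f := Equiv.iInf_comp (g := convObj x α lam y) e
end
end

section
/- (Proposition 1) Suppose y : (ZMod m × ZMod n) → ℝ is centrosymmetric. If f_* is a global minimizer of the correlation objective E, then f'_* := σf_* (channelwise reflection) is a global minimizer of the convolution objective E' with E(f_*) = E'(f'_*); moreover, for every d-channel detection sample x', the responses satisfy ‖R(x'; f_*) − y‖² = ‖R'(x'; f'_*) − y‖² and R(x'; f_*)(t) = R'(x'; f'_*)(−t) for all t ∈ ZMod m × ZMod n. -/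
open Finset

noncomputable section

variable {m n : ℕ} [NeZero m] [NeZero n]

variable {d : ℕ}

variable {T : ℕ}

lemma conv_reflect_neg (x f : ZMod m × ZMod n → ℝ) (t : ZMod m × ZMod n) :
    conv x (reflect f) (-t) = corr x f t := by
  unfold conv corr reflect
  apply Finset.sum_congr rfl
  intro s _
  rw [show -(-t - s) = s + t by ring]

lemma convResp_creflect_neg (x' f : Fin d → (ZMod m × ZMod n → ℝ)) (t : ZMod m × ZMod n) :
    convResp x' (creflect f) (-t) = corrResp x' f t := by
  unfold convResp corrResp creflect
  exact Finset.sum_congr rfl fun l _ => conv_reflect_neg _ _ _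

lemma normSq_reflect (f : ZMod m × ZMod n → ℝ) : normSq (reflect f) = normSq f :=
  normSq_comp_neg f

lemma normSq_conv_eq (x' f : Fin d → (ZMod m × ZMod n → ℝ)) (y : ZMod m × ZMod n → ℝ)
    (hy : ∀ t : ZMod m × ZMod n, y (-t) = y t) :
    normSq (fun t => convResp x' (creflect f) t - y t) =
      normSq (fun t => corrResp x' f t - y t) := by
  rw [← normSq_comp_neg (fun t => convResp x' (creflect f) t - y t)]
  congr 1
  funext t
  simp [convResp_creflect_neg, hy]

lemma creflect_creflect (f : Fin d → (ZMod m × ZMod n → ℝ)) : creflect (creflect f) = f := by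
  funext l t
  simp [creflect, reflect]

/-- **Proposition 1.** -/
theorem proposition1
    (x : Fin T → Fin d → (ZMod m × ZMod n → ℝ)) (α : Fin T → ℝ) (lam : ℝ)
    (y : ZMod m × ZMod n → ℝ) (hy : ∀ t : ZMod m × ZMod n, y (-t) = y t)
    (fstar : Fin d → (ZMod m × ZMod n → ℝ))
    (hmin : ∀ g : Fin d → (ZMod m × ZMod n → ℝ),
      corrObj x α lam y fstar ≤ corrObj x α lam y g) :
    (∀ g : Fin d → (ZMod m × ZMod n → ℝ),
        convObj x α lam y (creflect fstar) ≤ convObj x α lam y g) ∧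
      corrObj x α lam y fstar = convObj x α lam y (creflect fstar) ∧
      (∀ x' : Fin d → (ZMod m × ZMod n → ℝ),
        normSq (fun t => corrResp x' fstar t - y t) =
          normSq (fun t => convResp x' (creflect fstar) t - y t)) ∧
      (∀ x' : Fin d → (ZMod m × ZMod n → ℝ), ∀ t : ZMod m × ZMod n,
        corrResp x' fstar t = convResp x' (creflect fstar) (-t)) := by
  refine ⟨fun g => ?_, ?_, fun x' => (normSq_conv_eq x' fstar y hy).symm,
    fun x' t => (convResp_creflect_neg x' fstar t).symm⟩
  · rw [convObj_creflect x α lam y hy]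
    calc corrObj x α lam y fstar ≤ corrObj x α lam y (creflect g) := hmin _
      _ = convObj x α lam y (creflect (creflect g)) := (convObj_creflect x α lam y hy _).symm
      _ = convObj x α lam y g := by rw [creflect_creflect]
  · exact (convObj_creflect x α lam y hy fstar).symm
end
end
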